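/- Let F be a field, (P,≤) a poset, and I ⊆ P an interval (i.e., a connected and convex subset). Then the interval module F𝕀 is thin and indecomposable; more precisely, its endomorphism ring End(F𝕀) in the category of persistence modules over (P,≤) is isomorphic to F as a ring. -/

import Mathlib

/-- A persistence module over a preorder `P` with coefficients in a field `F`:
a functor `(P,≤) → Vect_F`, given by vector spaces `V p` and linear maps
`map : i ≤ j → (V i →ₗ[F] V j)` satisfying the functoriality equations. -/
structure PersistenceModule (F : Type) [Field F] (P : Type) [Preorder P] where
  V : P → Type
  [addCommGroup : ∀ p, AddCommGroup (V p)]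
  [module : ∀ p, Module F (V p)]
  map : ∀ {i j : P}, i ≤ j → (V i →ₗ[F] V j)
  map_id : ∀ i : P, map (le_refl i) = LinearMap.id
  map_comp : ∀ {i j k : P} (hij : i ≤ j) (hjk : j ≤ k),
    (map hjk).comp (map hij) = map (hij.trans hjk)

attribute [instance] PersistenceModule.addCommGroup PersistenceModule.module

/-- A zigzag path `a - x₁ - ⋯ - xₙ - b` in a preorder, where each consecutive
pair of points is comparable. -/
inductive Zigzag (P : Type) [Preorder P] : P → P → Type
  | single (a : P) : Zigzag P a a
  | consLe {a b c : P} (h : a ≤ b) (p : Zigzag P b c) : Zigzag P a c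
  | consGe {a b c : P} (h : b ≤ a) (p : Zigzag P b c) : Zigzag P a c

/-- Convexity of a subset of a poset: `i ≤ j ≤ k` with `i, k ∈ J` implies `j ∈ J`. -/
def PosetConvex {P : Type} [Preorder P] (J : Set P) : Prop :=
  ∀ i ∈ J, ∀ k ∈ J, ∀ j : P, i ≤ j → j ≤ k → j ∈ J

/-- Connectedness: any two points of `J` are joined by a finite zigzag path inside `J`. -/
def ZigzagConnected {P : Type} [Preorder P] (J : Set P) : Prop :=
  ∀ a b : J, Nonempty (Zigzag (↥J) a b)

open Classical in
/-- The interval (polytope) module `F𝕀` on a convex subset `I`: the vector space `F`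
at points of `I` (realized as the submodule `⊤ ≤ F`) and `0` (the submodule `⊥`)
elsewhere, with identity maps for comparable pairs inside `I` and zero maps
otherwise. -/
noncomputable def intervalModule (F : Type) [Field F] {P : Type} [Preorder P]
    (I : Set P) (hconv : PosetConvex I) : PersistenceModule F P where
  V p := ↥(if p ∈ I then (⊤ : Submodule F F) else ⊥)
  addCommGroup _ := inferInstance
  module _ := inferInstance
  map {i j} _ :=
    if hij : i ∈ I ∧ j ∈ I then
      Submodule.inclusion (by simp [hij.1, hij.2])
    else 0
  map_id := by
    intro i
    try dsimp only
    by_cases hi : i ∈ I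
    · rw [dif_pos (show i ∈ I ∧ i ∈ I from ⟨hi, hi⟩)]
      ext x
      rfl
    · rw [dif_neg (show ¬(i ∈ I ∧ i ∈ I) from fun h => hi h.1)]
      have : Subsingleton ↥(if i ∈ I then (⊤ : Submodule F F) else ⊥) := by
        rw [if_neg hi]; infer_instance
      exact Subsingleton.elim _ _
  map_comp := by
    intro i j k hij hjk
    try dsimp only
    by_cases hi : i ∈ I
    · by_cases hk : k ∈ I
      · have hj : j ∈ I := hconv i hi k hk j hij hjk
        rw [dif_pos (show i ∈ I ∧ j ∈ I from ⟨hi, hj⟩),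
          dif_pos (show j ∈ I ∧ k ∈ I from ⟨hj, hk⟩),
          dif_pos (show i ∈ I ∧ k ∈ I from ⟨hi, hk⟩)]
        ext x
        rfl
      · rw [dif_neg (show ¬(j ∈ I ∧ k ∈ I) from fun h => hk h.2),
          dif_neg (show ¬(i ∈ I ∧ k ∈ I) from fun h => hk h.2)]
        have : Subsingleton ↥(if k ∈ I then (⊤ : Submodule F F) else ⊥) := by
          rw [if_neg hk]; infer_instance
        exact Subsingleton.elim _ _
    · rw [dif_neg (show ¬(i ∈ I ∧ j ∈ I) from fun h => hi h.1),
        dif_neg (show ¬(i ∈ I ∧ k ∈ I) from fun h => hi h.1)]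
      ext x
      simp

/-- A subrepresentation of a persistence module: a family of submodules closed
under the structure maps. -/
structure Subrep {F : Type} [Field F] {P : Type} [Preorder P] (M : PersistenceModule F P) where
  S : ∀ p, Submodule F (M.V p)
  stable : ∀ {i j : P} (h : i ≤ j), Submodule.map (M.map h) (S i) ≤ S j

/-- A persistence module is decomposable if it is the (internal) direct sum of two
nonzero subrepresentations. -/
def PersistenceModule.Decomposable {F : Type} [Field F] {P : Type} [Preorder P]
    (M : PersistenceModule F P) : Prop :=
  ∃ A B : Subrep M, (∃ p, A.S p ≠ ⊥) ∧ (∃ p, B.S p ≠ ⊥) ∧ ∀ p, IsCompl (A.S p) (B.S p)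

/-- A morphism of persistence modules (a natural transformation). -/
structure PersHom {F : Type} [Field F] {P : Type} [Preorder P]
    (M N : PersistenceModule F P) where
  app : ∀ p, M.V p →ₗ[F] N.V p
  natural : ∀ {i j : P} (h : i ≤ j), (N.map h).comp (app i) = (app j).comp (M.map h)

/-- Composition of morphisms of persistence modules. -/
def PersHom.comp {F : Type} [Field F] {P : Type} [Preorder P]
    {M N K : PersistenceModule F P} (g : PersHom N K) (f : PersHom M N) : PersHom M K where
  app p := (g.app p).comp (f.app p)
  natural {i j} h := by
    ext x
    have hg := LinearMap.congr_fun (g.natural h) (f.app i x)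
    have hf := LinearMap.congr_fun (f.natural h) x
    simp only [LinearMap.comp_apply] at hg hf ⊢
    rw [hg, hf]

/-- Pointwise sum of morphisms of persistence modules. -/
def PersHom.add {F : Type} [Field F] {P : Type} [Preorder P]
    {M N : PersistenceModule F P} (f g : PersHom M N) : PersHom M N where
  app p := f.app p + g.app p
  natural {i j} h := by
    ext x
    have hg := LinearMap.congr_fun (g.natural h) x
    have hf := LinearMap.congr_fun (f.natural h) x
    simp only [LinearMap.comp_apply, LinearMap.add_apply, map_add] at hg hf ⊢
    rw [hg, hf]

/-- The identity endomorphism of a persistence module. -/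
def PersHom.one {F : Type} [Field F] {P : Type} [Preorder P]
    (M : PersistenceModule F P) : PersHom M M where
  app _ := LinearMap.id
  natural h := by simp

/-! The stalk of `F𝕀` is the line `F` at the points of `I` and `0` elsewhere, and every structure
map between two points of `I` is the identity of `F`. An endomorphism therefore acts on each stalk
over `I` by a scalar; naturality makes the scalars at comparable points equal, and connectedness
makes the scalar global, which identifies the endomorphism ring with `F`. Likewise, in a
decomposition `A ⊕ B` each summand is `0` or the whole line at each point of `I`; the points where
`A` is everything are closed upwards (`A` is a subrepresentation) and downwards (so is `B`), so by
connectedness `A` is everything on all of `I`, leaving no room for `B`. -/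

theorem Zigzag.apply_eq {Q α : Type} [Preorder Q] (f : Q → α)
    (hf : ∀ a b : Q, a ≤ b → f a = f b) {a b : Q} (z : Zigzag Q a b) : f a = f b := by
  induction z with
  | single => rfl
  | consLe h _ ih => exact (hf _ _ h).trans ih
  | consGe h _ ih => exact (hf _ _ h).symm.trans ih

theorem PersHom.ext {F : Type} [Field F] {P : Type} [Preorder P] {M N : PersistenceModule F P}
    {f g : PersHom M N} (h : ∀ p, f.app p = g.app p) : f = g := by
  cases f; cases g
  congr
  exact funext h

def PersHom.ofScalar {F : Type} [Field F] {P : Type} [Preorder P] (M : PersistenceModule F P)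
    (c : F) : PersHom M M where
  app _ := c • LinearMap.id
  natural h := by ext; simp

namespace intervalModule

variable {F : Type} [Field F] {P : Type} [Preorder P] {I : Set P} {hconv : PosetConvex I}

noncomputable def val (p : P) : (intervalModule F I hconv).V p →ₗ[F] F := Submodule.subtype _

theorem val_injective (p : P) : Function.Injective (val p : (intervalModule F I hconv).V p → F) :=
  Submodule.injective_subtype _

theorem val_map {i j : P} (h : i ≤ j) (hi : i ∈ I) (hj : j ∈ I)
    (x : (intervalModule F I hconv).V i) :
    val j ((intervalModule F I hconv).map h x) = val i x := by
  simp only [intervalModule, dif_pos (And.intro hi hj)]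
  rfl

theorem val_surjective {p : P} (hp : p ∈ I) :
    Function.Surjective (val p : (intervalModule F I hconv).V p → F) :=
  fun c => ⟨⟨c, by simp [hp]⟩, rfl⟩

theorem isSimpleModule_stalk {p : P} (hp : p ∈ I) :
    IsSimpleModule F ((intervalModule F I hconv).V p) :=
  .congr (LinearEquiv.ofBijective (val p) ⟨val_injective p, val_surjective hp⟩)

open Classical in
theorem subsingleton_stalk {p : P} (hp : p ∉ I) :
    Subsingleton ((intervalModule F I hconv).V p) := by
  show Subsingleton ↥(if p ∈ I then (⊤ : Submodule F F) else ⊥)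
  rw [if_neg hp]
  infer_instance

theorem rank_stalk_le_one (p : P) : Module.rank F ((intervalModule F I hconv).V p) ≤ 1 :=
  (Submodule.rank_le _).trans_eq (Module.rank_self F)

noncomputable def generator {p : P} (hp : p ∈ I) : (intervalModule F I hconv).V p :=
  ⟨1, by simp [hp]⟩

theorem val_generator {p : P} (hp : p ∈ I) :
    val p (generator (hconv := hconv) hp) = (1 : F) :=
  rfl

theorem generator_ne_zero {p : P} (hp : p ∈ I) : generator (F := F) (hconv := hconv) hp ≠ 0 :=
  fun h => one_ne_zero (by rw [← val_generator hp, h, map_zero] : (1 : F) = 0)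

theorem eq_val_smul_generator {p : P} (hp : p ∈ I) (x : (intervalModule F I hconv).V p) :
    x = val p x • generator hp :=
  val_injective p (by rw [map_smul, val_generator, smul_eq_mul, mul_one])

theorem map_generator {i j : P} (h : i ≤ j) (hi : i ∈ I) (hj : j ∈ I) :
    (intervalModule F I hconv).map h (generator hi) = generator hj :=
  val_injective j (val_map h hi hj _)

section Endomorphisms

variable (f g : PersHom (intervalModule F I hconv) (intervalModule F I hconv))

noncomputable def scalar (a : I) : F := val a.1 (f.app a (generator a.2))

theorem app_eq_smul {p : P} (hp : p ∈ I) (x : (intervalModule F I hconv).V p) :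
    f.app p x = scalar f ⟨p, hp⟩ • x := by
  apply val_injective p
  conv_lhs => rw [eq_val_smul_generator hp x]
  rw [map_smul, map_smul, map_smul, smul_eq_mul, smul_eq_mul, mul_comm]
  rfl

theorem scalar_eq_of_le {i j : P} (h : i ≤ j) (hi : i ∈ I) (hj : j ∈ I) :
    scalar f ⟨i, hi⟩ = scalar f ⟨j, hj⟩ := by
  have hnat := LinearMap.congr_fun (f.natural h) (generator hi)
  rw [LinearMap.comp_apply, LinearMap.comp_apply, map_generator h hi hj] at hnat
  rw [scalar, ← val_map h hi hj, hnat]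
  rfl

theorem scalar_eq (hconn : ZigzagConnected I) (a b : I) : scalar f a = scalar f b :=
  (hconn a b).some.apply_eq _ fun a b h => scalar_eq_of_le f (Subtype.coe_le_coe.2 h) a.2 b.2

variable {f g} in
theorem ext_of_scalar_eq (hconn : ZigzagConnected I) {a : I} (h : scalar f a = scalar g a) :
    f = g := by
  refine PersHom.ext fun p => ?_
  by_cases hp : p ∈ I
  · ext x
    rw [app_eq_smul f hp, app_eq_smul g hp, scalar_eq f hconn _ a, scalar_eq g hconn _ a, h]
  · have := subsingleton_stalk (F := F) (hconv := hconv) hp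
    exact Subsingleton.elim _ _

theorem scalar_ofScalar (c : F) (a : I) :
    scalar (PersHom.ofScalar (intervalModule F I hconv) c) a = c := by
  show val a.1 (c • generator a.2) = c
  rw [map_smul, val_generator, smul_eq_mul, mul_one]

theorem scalar_add (a : I) : scalar (f.add g) a = scalar f a + scalar g a :=
  map_add (val a.1) _ _

theorem scalar_comp (a : I) : scalar (f.comp g) a = scalar f a * scalar g a := by
  show val a.1 (f.app a (g.app a (generator a.2))) = _
  rw [app_eq_smul f a.2, map_smul, smul_eq_mul]
  rfl

theorem scalar_one (a : I) : scalar (PersHom.one (intervalModule F I hconv)) a = 1 := rfl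

theorem scalar_bijective (hconn : ZigzagConnected I) (a : I) :
    Function.Bijective fun f : PersHom (intervalModule F I hconv) _ => scalar f a :=
  ⟨fun _ _ => ext_of_scalar_eq hconn, fun c => ⟨_, scalar_ofScalar c a⟩⟩

end Endomorphisms

section Subrep

variable (A B : Subrep (intervalModule F I hconv))

theorem subrep_eq_bot_or_eq_top {p : P} (hp : p ∈ I) : A.S p = ⊥ ∨ A.S p = ⊤ :=
  have := isSimpleModule_stalk (F := F) (hconv := hconv) hp
  eq_bot_or_eq_top _

theorem subrep_eq_bot_of_not_mem {p : P} (hp : p ∉ I) : A.S p = ⊥ :=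
  have := subsingleton_stalk (F := F) (hconv := hconv) hp
  Subsingleton.elim _ _

theorem subrep_eq_top_of_le {i j : P} (h : i ≤ j) (hi : i ∈ I) (hj : j ∈ I)
    (hA : A.S i = ⊤) : A.S j = ⊤ := by
  have hmem : generator hj ∈ A.S j :=
    A.stable h ⟨generator hi, hA ▸ Submodule.mem_top, map_generator h hi hj⟩
  refine (subrep_eq_bot_or_eq_top A hj).resolve_left fun hbot => ?_
  exact generator_ne_zero hj ((Submodule.mem_bot F).mp (hbot ▸ hmem))

variable {A B}

theorem subrep_eq_top_iff_of_le (hAB : ∀ p, IsCompl (A.S p) (B.S p)) {i j : P} (h : i ≤ j)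
    (hi : i ∈ I) (hj : j ∈ I) : A.S i = ⊤ ↔ A.S j = ⊤ := by
  refine ⟨subrep_eq_top_of_le A h hi hj, fun hA => ?_⟩
  have hBj : B.S j = ⊥ := eq_bot_of_top_isCompl (hA ▸ hAB j)
  rcases subrep_eq_bot_or_eq_top B hi with hBi | hBi
  · exact eq_top_of_isCompl_bot (hBi ▸ hAB i)
  · have := isSimpleModule_stalk (F := F) (hconv := hconv) hj
    exact absurd (hBj ▸ subrep_eq_top_of_le B h hi hj hBi) bot_ne_top

end Subrep

theorem not_decomposable (hconn : ZigzagConnected I) :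
    ¬ (intervalModule F I hconv).Decomposable := by
  rintro ⟨A, B, ⟨p, hAp⟩, ⟨q, hBq⟩, hAB⟩
  have hp : p ∈ I := by_contra fun hp => hAp (subrep_eq_bot_of_not_mem A hp)
  have hq : q ∈ I := by_contra fun hq => hBq (subrep_eq_bot_of_not_mem B hq)
  have hAq : A.S q = ⊤ :=
    (hconn ⟨p, hp⟩ ⟨q, hq⟩).some.apply_eq (fun a : I => A.S a = ⊤)
      (fun a b h => propext (subrep_eq_top_iff_of_le hAB (Subtype.coe_le_coe.2 h) a.2 b.2))
      ▸ (subrep_eq_bot_or_eq_top A hp).resolve_left hAp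
  exact hBq (eq_bot_of_top_isCompl (hAq ▸ hAB q))

end intervalModule

theorem statement0 (F : Type) [Field F] (P : Type) [PartialOrder P]
    (I : Set P) (hne : I.Nonempty) (hconv : PosetConvex I) (hconn : ZigzagConnected I) :
    (∀ p : P, Module.rank F ((intervalModule F I hconv).V p) ≤ 1) ∧
    ¬ (intervalModule F I hconv).Decomposable ∧
    ∃ Φ : PersHom (intervalModule F I hconv) (intervalModule F I hconv) → F,
      Function.Bijective Φ ∧
      (∀ f g, Φ (f.add g) = Φ f + Φ g) ∧
      (∀ f g, Φ (f.comp g) = Φ f * Φ g) ∧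
      Φ (PersHom.one (intervalModule F I hconv)) = 1 := by
  obtain ⟨p, hp⟩ := hne
  open intervalModule in
  exact ⟨rank_stalk_le_one, not_decomposable hconn, fun f => scalar f ⟨p, hp⟩,
    scalar_bijective hconn _, fun f g => scalar_add f g _, fun f g => scalar_comp f g _,
    scalar_one _⟩
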